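/- Consider the left-invariant error system on SE(2) with state space ℝ³ = so(2) ⊕ ℝ² (heading error δθ ∈ ℝ followed by position error δp ∈ ℝ²), with one-step transition matrices Φ(t+1,t) = [[1, 0],[b_t, A_t]] where A_t ∈ SO(2) and b_t ∈ ℝ². Define the accumulated coupling vectors by c_0 = 0 and c_{t+1} = A_t c_t + b_t, so that Φ(t,0) = [[1, 0],[c_t, A_{t-1}⋯A_0]]. Let the only sensor be a position measurement H = [0 I₂] with noise covariance R ≻ 0, and let W_o(T) be the corresponding observability Gramian. Then for every horizon T ≥ 1, the heading direction e₁ = (1, 0, 0) lies in the kernel of W_o(T) if and only if c_t = 0 for all 0 ≤ t ≤ T−1. In particular, position-only sensing renders the heading observable over the horizon T if and only if the dynamics produce a nonzero accumulated coupling c_t for some t < T. -/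

import Mathlib

/-!
Since `Φ(t,0) e₁ = (1, c_t)`, the position sensor sees `H Φ(t,0) e₁ = c_t`. The Gramian is a sum
of positive semidefinite terms `(H Φ(t,0))ᵀ R⁻¹ (H Φ(t,0))`, so its kernel is the intersection of
their kernels, and as `R⁻¹ ≻ 0` the kernel of each term is that of `H Φ(t,0)`.
-/

/-- Ordered product `f (b-1) * ⋯ * f a` (and `1` when `b ≤ a`). -/
def matProdRange {α : Type*} [Monoid α] (f : ℕ → α) (a b : ℕ) : α :=
  (((List.range' a (b - a)).reverse).map f).prod

theorem matProdRange_zero_zero {α : Type*} [Monoid α] (f : ℕ → α) : matProdRange f 0 0 = 1 :=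
  rfl

theorem matProdRange_zero_succ {α : Type*} [Monoid α] (f : ℕ → α) (t : ℕ) :
    matProdRange f 0 (t + 1) = f t * matProdRange f 0 t := by
  simp [matProdRange, List.range'_concat]

namespace Matrix

section Gram

open scoped ComplexOrder

variable {ι m n 𝕜 : Type*} [RCLike 𝕜] [Fintype n]

theorem PosSemidef.sum_mulVec_eq_zero_iff {P : ι → Matrix n n 𝕜} (s : Finset ι)
    (hP : ∀ i ∈ s, (P i).PosSemidef) (x : n → 𝕜) :
    (∑ i ∈ s, P i) *ᵥ x = 0 ↔ ∀ i ∈ s, P i *ᵥ x = 0 := by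
  rw [← (posSemidef_sum s hP).dotProduct_mulVec_zero_iff, sum_mulVec, dotProduct_sum,
    Finset.sum_eq_zero_iff_of_nonneg fun i hi ↦ (hP i hi).dotProduct_mulVec_nonneg x]
  exact forall₂_congr fun i hi ↦ (hP i hi).dotProduct_mulVec_zero_iff x

theorem PosDef.conjTranspose_mul_mul_same_mulVec_eq_zero_iff [Fintype m] {Q : Matrix m m 𝕜}
    (hQ : Q.PosDef) (B : Matrix m n 𝕜) (x : n → 𝕜) :
    (Bᴴ * Q * B) *ᵥ x = 0 ↔ B *ᵥ x = 0 := by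
  rw [← (hQ.posSemidef.conjTranspose_mul_mul_same B).dotProduct_mulVec_zero_iff,
    ← mulVec_mulVec, ← mulVec_mulVec, dotProduct_mulVec, vecMul_conjTranspose, star_star]
  refine ⟨fun h ↦ ?_, fun h ↦ by rw [h, mulVec_zero, dotProduct_zero]⟩
  by_contra hBx
  exact (hQ.dotProduct_mulVec_pos hBx).ne' h

end Gram

section Blocks

variable {ι l m R : Type*} [Fintype ι] [Fintype m] [Semiring R]

theorem fromBlocks_replicateCol_mul_fromBlocks_replicateCol [DecidableEq ι] (b c : m → R)
    (A P : Matrix m m R) :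
    fromBlocks (1 : Matrix ι ι R) 0 (replicateCol ι b) A * fromBlocks 1 0 (replicateCol ι c) P =
      fromBlocks 1 0 (replicateCol ι (A *ᵥ c + b)) (A * P) := by
  simp [fromBlocks_multiply, replicateCol_mulVec, replicateCol_add, add_comm]

theorem fromCols_zero_one_mul_fromBlocks [DecidableEq m] (A : Matrix ι l R) (B : Matrix ι m R)
    (C : Matrix m l R) (D : Matrix m m R) :
    fromCols (0 : Matrix m ι R) (1 : Matrix m m R) * fromBlocks A B C D = fromCols C D := by
  simp [fromCols_mul_fromBlocks]

end Blocks

end Matrix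

open Matrix

theorem eq_fromBlocks_replicateCol_matProdRange {ι m R : Type*} [Fintype ι] [DecidableEq ι]
    [Fintype m] [DecidableEq m] [Semiring R] (A : ℕ → Matrix m m R) (b c : ℕ → m → R)
    (Phi : ℕ → Matrix (ι ⊕ m) (ι ⊕ m) R) (hPhi0 : Phi 0 = 1)
    (hPhiSucc : ∀ t, Phi (t + 1) = fromBlocks 1 0 (replicateCol ι (b t)) (A t) * Phi t)
    (hc0 : c 0 = 0) (hcSucc : ∀ t, c (t + 1) = A t *ᵥ c t + b t) (t : ℕ) :
    Phi t = fromBlocks 1 0 (replicateCol ι (c t)) (matProdRange A 0 t) := by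
  induction t with
  | zero => rw [hPhi0, hc0, matProdRange_zero_zero, replicateCol_zero, fromBlocks_one]
  | succ t ih =>
    rw [hPhiSucc, ih, fromBlocks_replicateCol_mul_fromBlocks_replicateCol, hcSucc,
      matProdRange_zero_succ]

open Matrix Finset in
theorem se2_heading_kernel_iff_coupling_zero_general
    (A : ℕ → Matrix (Fin 2) (Fin 2) ℝ)
    (b : ℕ → Fin 2 → ℝ)
    (Phi : ℕ → Matrix (Fin 1 ⊕ Fin 2) (Fin 1 ⊕ Fin 2) ℝ)
    (hPhi0 : Phi 0 = 1)
    (hPhiSucc : ∀ t, Phi (t + 1) =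
      Matrix.fromBlocks 1 0 (Matrix.of fun r (_ : Fin 1) => b t r) (A t) * Phi t)
    (c : ℕ → Fin 2 → ℝ)
    (hc0 : c 0 = 0)
    (hcSucc : ∀ t, c (t + 1) = (A t).mulVec (c t) + b t)
    (H : Matrix (Fin 2) (Fin 1 ⊕ Fin 2) ℝ)
    (hH : H = Matrix.fromCols 0 1)
    (Rn : Matrix (Fin 2) (Fin 2) ℝ) (hRn : Rn.PosDef)
    (W : ℕ → Matrix (Fin 1 ⊕ Fin 2) (Fin 1 ⊕ Fin 2) ℝ)
    (hW : ∀ T, W T = ∑ t ∈ Finset.range T, (Phi t)ᵀ * Hᵀ * Rn⁻¹ * H * Phi t) :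
    (∀ t, Phi t =
      Matrix.fromBlocks 1 0 (Matrix.of fun r (_ : Fin 1) => c t r) (matProdRange A 0 t)) ∧
    ∀ T, 1 ≤ T →
      ((W T).mulVec (Sum.elim 1 0) = 0 ↔ ∀ t < T, c t = 0) := by
  have hPhi := eq_fromBlocks_replicateCol_matProdRange A b c Phi hPhi0 hPhiSucc hc0 hcSucc
  refine ⟨hPhi, fun T _ ↦ ?_⟩
  have hobserve : ∀ t, (H * Phi t) *ᵥ Sum.elim 1 0 = c t := fun t ↦ by
    rw [hH, hPhi, fromCols_zero_one_mul_fromBlocks, fromCols_mulVec_sumElim, mulVec_zero, add_zero]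
    ext
    simp [mulVec, dotProduct]
  have hgram : ∀ t, (Phi t)ᵀ * Hᵀ * Rn⁻¹ * H * Phi t = (H * Phi t)ᴴ * Rn⁻¹ * (H * Phi t) := by
    simp [conjTranspose_eq_transpose_of_trivial, transpose_mul, Matrix.mul_assoc]
  simp_rw [hW, hgram]
  rw [PosSemidef.sum_mulVec_eq_zero_iff _
    fun t _ ↦ hRn.inv.posSemidef.conjTranspose_mul_mul_same (H * Phi t)]
  simp_rw [hRn.inv.conjTranspose_mul_mul_same_mulVec_eq_zero_iff, hobserve, Finset.mem_range]

open Matrix Finset in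
theorem se2_heading_kernel_iff_coupling_zero
    (A : ℕ → Matrix (Fin 2) (Fin 2) ℝ)
    (hAOrtho : ∀ t, (A t)ᵀ * A t = 1)
    (hADet : ∀ t, (A t).det = 1)
    (b : ℕ → Fin 2 → ℝ)
    (Phi : ℕ → Matrix (Fin 1 ⊕ Fin 2) (Fin 1 ⊕ Fin 2) ℝ)
    (hPhi0 : Phi 0 = 1)
    (hPhiSucc : ∀ t, Phi (t + 1) =
      Matrix.fromBlocks 1 0 (Matrix.of fun r (_ : Fin 1) => b t r) (A t) * Phi t)
    (c : ℕ → Fin 2 → ℝ)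
    (hc0 : c 0 = 0)
    (hcSucc : ∀ t, c (t + 1) = (A t).mulVec (c t) + b t)
    (H : Matrix (Fin 2) (Fin 1 ⊕ Fin 2) ℝ)
    (hH : H = Matrix.fromCols 0 1)
    (Rn : Matrix (Fin 2) (Fin 2) ℝ) (hRn : Rn.PosDef)
    (W : ℕ → Matrix (Fin 1 ⊕ Fin 2) (Fin 1 ⊕ Fin 2) ℝ)
    (hW : ∀ T, W T = ∑ t ∈ Finset.range T, (Phi t)ᵀ * Hᵀ * Rn⁻¹ * H * Phi t) :
    (∀ t, Phi t =
      Matrix.fromBlocks 1 0 (Matrix.of fun r (_ : Fin 1) => c t r) (matProdRange A 0 t)) ∧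
    ∀ T, 1 ≤ T →
      ((W T).mulVec (Sum.elim 1 0) = 0 ↔ ∀ t < T, c t = 0) :=
  se2_heading_kernel_iff_coupling_zero_general A b Phi hPhi0 hPhiSucc c hc0 hcSucc H hH Rn hRn W hW
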